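/- arXiv:2602.03869 — 3 statements merged into one kernel-verified Lean document; each statement's English description precedes it below -/
import Mathlib

section
/- Assume the commutation rule ξ(t) = η'(t) holds for all t ∈ ℝ and the total variation vanishes, δᵥg(t) = 0 for all t ∈ ℝ. Then for every t ∈ ℝ, (d/dt)[δ꜀g](t) = Σ_{i=1}^{n} 𝒟ᵢg(t)·η_i(t) (the vakonomic variation identity). -/
open BigOperators

variable {n : ℕ}

/-- Partial derivative of a constraint function `g(x, v, t)` with respect to `x_i`. -/
noncomputable def pdx (g : (Fin n → ℝ) × (Fin n → ℝ) × ℝ → ℝ) (i : Fin n)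
    (p : (Fin n → ℝ) × (Fin n → ℝ) × ℝ) : ℝ :=
  fderiv ℝ g p (Pi.single i 1, 0, 0)

/-- Partial derivative of a constraint function `g(x, v, t)` with respect to `v_i`. -/
noncomputable def pdv (g : (Fin n → ℝ) × (Fin n → ℝ) × ℝ → ℝ) (i : Fin n)
    (p : (Fin n → ℝ) × (Fin n → ℝ) × ℝ) : ℝ :=
  fderiv ℝ g p (0, Pi.single i 1, 0)

/-- The Chetaev variation `δ꜀g(t) = Σ_i (∂g/∂v_i)(q(t), q'(t), t) · η_i(t)`. -/
noncomputable def chetaevVar (g : (Fin n → ℝ) × (Fin n → ℝ) × ℝ → ℝ)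
    (q η : ℝ → Fin n → ℝ) (t : ℝ) : ℝ :=
  ∑ i, pdv g i (q t, deriv q t, t) * η t i

/-- The total variation
`δᵥg(t) = Σ_i (∂g/∂x_i)(q(t), q'(t), t) · η_i(t) + Σ_i (∂g/∂v_i)(q(t), q'(t), t) · ξ_i(t)`. -/
noncomputable def totalVar (g : (Fin n → ℝ) × (Fin n → ℝ) × ℝ → ℝ)
    (q η ξ : ℝ → Fin n → ℝ) (t : ℝ) : ℝ :=
  ∑ i, pdx g i (q t, deriv q t, t) * η t i + ∑ i, pdv g i (q t, deriv q t, t) * ξ t i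

/-- The Lagrangian derivative
`𝒟ᵢg(t) = (d/dt)[(∂g/∂v_i)(q(t), q'(t), t)] − (∂g/∂x_i)(q(t), q'(t), t)`. -/
noncomputable def lagD (g : (Fin n → ℝ) × (Fin n → ℝ) × ℝ → ℝ)
    (q : ℝ → Fin n → ℝ) (i : Fin n) (t : ℝ) : ℝ :=
  deriv (fun s => pdv g i (q s, deriv q s, s)) t - pdx g i (q t, deriv q t, t)

open Finset

/-! The product rule turns `(d/dt) δ꜀g` into `Σᵢ (d/dt)(∂g/∂vᵢ) ηᵢ + Σᵢ (∂g/∂vᵢ) ηᵢ'`. Adding and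
subtracting `Σᵢ (∂g/∂xᵢ) ηᵢ` rewrites this as `Σᵢ 𝒟ᵢg ηᵢ + δᵥg` with `ξ = η'`, and the last term
vanishes by hypothesis. -/

theorem deriv_sum_mul_apply {ι : Type*} [Fintype ι] {a : ι → ℝ → ℝ} {η : ℝ → ι → ℝ} {t : ℝ}
    (ha : ∀ i, DifferentiableAt ℝ (a i) t) (hη : DifferentiableAt ℝ η t) :
    deriv (fun s => ∑ i, a i s * η s i) t =
      ∑ i, (deriv (a i) t * η t i + a i t * deriv η t i) := by
  have hηi : ∀ i, HasDerivAt (fun s => η s i) (deriv η t i) t :=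
    hasDerivAt_pi.1 hη.hasDerivAt
  rw [deriv_fun_sum (A := fun i s => a i s * η s i) fun i _ => (ha i).mul (hηi i).differentiableAt]
  exact sum_congr rfl fun i _ => ((ha i).hasDerivAt.mul (hηi i)).deriv

section Jet

variable {g : (Fin n → ℝ) × (Fin n → ℝ) × ℝ → ℝ} {q : ℝ → Fin n → ℝ}

theorem differentiable_pdv_jet (hg : ContDiff ℝ 2 g) (hq : ContDiff ℝ 2 q) (i : Fin n) :
    Differentiable ℝ fun s => pdv g i (q s, deriv q s, s) := by
  have hq₁ : Differentiable ℝ q := hq.differentiable two_ne_zero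
  have hq₂ : Differentiable ℝ (deriv q) := hq.differentiable_deriv_two
  unfold pdv
  fun_prop

theorem deriv_chetaevVar (hg : ContDiff ℝ 2 g) (hq : ContDiff ℝ 2 q) {η : ℝ → Fin n → ℝ}
    {t : ℝ} (hη : DifferentiableAt ℝ η t) :
    deriv (chetaevVar g q η) t = ∑ i, lagD g q i t * η t i + totalVar g q η (deriv η) t := by
  rw [show chetaevVar g q η = fun s => ∑ i, pdv g i (q s, deriv q s, s) * η s i from rfl,
    deriv_sum_mul_apply (fun i => differentiable_pdv_jet hg hq i t) hη]
  simp only [lagD, totalVar, sub_mul, sum_add_distrib, sum_sub_distrib]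
  ring

end Jet

theorem vakonomic_variation_general
    (g : (Fin n → ℝ) × (Fin n → ℝ) × ℝ → ℝ) (hg : ContDiff ℝ 2 g)
    (q : ℝ → Fin n → ℝ) (hq : ContDiff ℝ 2 q)
    (η ξ : ℝ → Fin n → ℝ) (hη : Differentiable ℝ η)
    (hcomm : ∀ t : ℝ, ξ t = deriv η t)
    (htot : ∀ t : ℝ, totalVar g q η ξ t = 0)
    (t : ℝ) :
    deriv (chetaevVar g q η) t = ∑ i, lagD g q i t * η t i := by
  obtain rfl : ξ = deriv η := funext hcomm
  rw [deriv_chetaevVar hg hq (hη t), htot t, add_zero]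

/-- Vakonomic variation: if the commutation rule `ξ = η'` holds and the total variation
vanishes identically, then `(d/dt)[δ꜀g](t) = Σ_i 𝒟ᵢg(t) · η_i(t)`. -/
theorem vakonomic_variation
    (g : (Fin n → ℝ) × (Fin n → ℝ) × ℝ → ℝ) (hg : ContDiff ℝ 2 g)
    (q : ℝ → Fin n → ℝ) (hq : ContDiff ℝ 2 q)
    (η ξ : ℝ → Fin n → ℝ) (hη : Differentiable ℝ η) (hξ : Differentiable ℝ ξ)
    (hcomm : ∀ t : ℝ, ξ t = deriv η t)
    (htot : ∀ t : ℝ, totalVar g q η ξ t = 0)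
    (t : ℝ) :
    deriv (chetaevVar g q η) t = ∑ i, lagD g q i t * η t i :=
  vakonomic_variation_general g hg q hq η ξ hη hcomm htot t
end

section
/- Assume the Chetaev condition δ꜀g(t) = 0 holds for all t ∈ ℝ, the total variation vanishes, δᵥg(t) = 0 for all t ∈ ℝ, and the commutation rule ξ(t) = η'(t) holds for all t ∈ ℝ. Then Σ_{i=1}^{n} 𝒟ᵢg(t)·η_i(t) = 0 for every t ∈ ℝ; that is, the vanishing of the sum of the Lagrangian derivatives weighted by the virtual displacement is a necessary condition for the commutation rule under the simultaneous Chetaev and total-variation conditions. -/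
open BigOperators

variable {n : ℕ}

theorem ContDiff.differentiable_fderiv_apply {𝕜 E F : Type*} [NontriviallyNormedField 𝕜]
    [NormedAddCommGroup E] [NormedSpace 𝕜 E] [NormedAddCommGroup F] [NormedSpace 𝕜 F]
    {f : E → F} (hf : ContDiff 𝕜 2 f) (v : E) :
    Differentiable 𝕜 fun p => fderiv 𝕜 f p v :=
  ((hf.fderiv_right (by norm_num)).differentiable one_ne_zero).clm_apply (differentiable_const v)

theorem ContDiff.differentiable_jet {E : Type*} [NormedAddCommGroup E] [NormedSpace ℝ E]
    {q : ℝ → E} (hq : ContDiff ℝ 2 q) :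
    Differentiable ℝ fun s => (q s, deriv q s, s) :=
  (hq.differentiable (by norm_num)).prodMk
    (((hq.deriv' (n := 1)).differentiable one_ne_zero).prodMk differentiable_id)

theorem hasDerivAt_chetaevVar {g : (Fin n → ℝ) × (Fin n → ℝ) × ℝ → ℝ} (hg : ContDiff ℝ 2 g)
    {q η : ℝ → Fin n → ℝ} (hq : ContDiff ℝ 2 q) (hη : Differentiable ℝ η) (t : ℝ) :
    HasDerivAt (chetaevVar g q η)
      (∑ i, deriv (fun s => pdv g i (q s, deriv q s, s)) t * η t i +
        ∑ i, pdv g i (q t, deriv q t, t) * deriv η t i) t := by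
  rw [← Finset.sum_add_distrib]
  refine HasDerivAt.fun_sum fun i _ => HasDerivAt.mul ?_ (hasDerivAt_pi.mp (hη t).hasDerivAt i)
  exact ((hg.differentiable_fderiv_apply _).comp hq.differentiable_jet t).hasDerivAt

theorem sum_lagD_mul_eq_deriv_chetaevVar_sub_totalVar
    {g : (Fin n → ℝ) × (Fin n → ℝ) × ℝ → ℝ} (hg : ContDiff ℝ 2 g)
    {q η : ℝ → Fin n → ℝ} (hq : ContDiff ℝ 2 q) (hη : Differentiable ℝ η) (t : ℝ) :
    ∑ i, lagD g q i t * η t i = deriv (chetaevVar g q η) t - totalVar g q η (deriv η) t := by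
  rw [(hasDerivAt_chetaevVar hg hq hη t).deriv, totalVar]
  simp only [lagD, sub_mul, Finset.sum_sub_distrib]
  ring

theorem suslov_necessary_condition_general
    (g : (Fin n → ℝ) × (Fin n → ℝ) × ℝ → ℝ) (hg : ContDiff ℝ 2 g)
    (q : ℝ → Fin n → ℝ) (hq : ContDiff ℝ 2 q)
    (η ξ : ℝ → Fin n → ℝ) (hη : Differentiable ℝ η)
    (hchet : ∀ t : ℝ, chetaevVar g q η t = 0)
    (htot : ∀ t : ℝ, totalVar g q η ξ t = 0)
    (hcomm : ∀ t : ℝ, ξ t = deriv η t)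
    (t : ℝ) :
    ∑ i, lagD g q i t * η t i = 0 := by
  have hchet' : chetaevVar g q η = fun _ => 0 := funext hchet
  have hcomm' : ξ = deriv η := funext hcomm
  rw [sum_lagD_mul_eq_deriv_chetaevVar_sub_totalVar hg hq hη, hchet', ← hcomm', htot,
    deriv_const, sub_zero]

/-- If the Chetaev condition `δ꜀g = 0`, the total-variation condition `δᵥg = 0` and the
commutation rule `ξ = η'` hold simultaneously, then `Σ_i 𝒟ᵢg(t) · η_i(t) = 0` for all `t`:
this vanishing is a necessary condition for commutation under the two conditions. -/
theorem suslov_necessary_condition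
    (g : (Fin n → ℝ) × (Fin n → ℝ) × ℝ → ℝ) (hg : ContDiff ℝ 2 g)
    (q : ℝ → Fin n → ℝ) (hq : ContDiff ℝ 2 q)
    (η ξ : ℝ → Fin n → ℝ) (hη : Differentiable ℝ η) (hξ : Differentiable ℝ ξ)
    (hchet : ∀ t : ℝ, chetaevVar g q η t = 0)
    (htot : ∀ t : ℝ, totalVar g q η ξ t = 0)
    (hcomm : ∀ t : ℝ, ξ t = deriv η t)
    (t : ℝ) :
    ∑ i, lagD g q i t * η t i = 0 :=
  suslov_necessary_condition_general g hg q hq η ξ hη hchet htot hcomm t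
end

section
/- Fix ν ∈ {1,…,κ}. Suppose there exist a real number φ ≠ 0 and a vector p ∈ (Fin n → ℝ) such that φ·A_{i,j} = a_{ν,j}·p_i − a_{ν,i}·p_j for all i, j ∈ {1,…,n} (the pointwise form of the closure conditions for a constraint admitting an integrating factor, with p playing the role of the gradient of φ). Then μ_{i,j} = 0 for all i, j ∈ {1,…,n−κ}, where μ is built from a and A using the row index ν. -/
open Matrix BigOperators

/-- The index `κ + i` of `Fin n`, for `i : Fin (n - κ)`. -/
def shiftIdx {κ n : ℕ} (h : κ < n) (i : Fin (n - κ)) : Fin n :=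
  ⟨κ + i.1, by have := i.2; omega⟩

/-- `D`: determinant of the `κ × κ` submatrix formed by the first `κ` columns of `a`. -/
noncomputable def detD {κ n : ℕ} (h : κ < n) (a : Matrix (Fin κ) (Fin n) ℝ) : ℝ :=
  Matrix.det (Matrix.of fun ν μ : Fin κ => a ν (Fin.castLE h.le μ))

/-- `D_r(ℓ)`: as `D`, but with the `r`-th column replaced by the `ℓ`-th column of `a`. -/
noncomputable def detDr {κ n : ℕ} (h : κ < n) (a : Matrix (Fin κ) (Fin n) ℝ)
    (r : Fin κ) (ℓ : Fin n) : ℝ :=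
  Matrix.det (Matrix.of fun ν μ : Fin κ => a ν (if μ = r then ℓ else Fin.castLE h.le μ))

/-- `D_{r,s}(ℓ,m)`: as `D`, but with the `r`-th and `s`-th columns replaced by the
`ℓ`-th and `m`-th columns of `a`. -/
noncomputable def detDrs {κ n : ℕ} (h : κ < n) (a : Matrix (Fin κ) (Fin n) ℝ)
    (r s : Fin κ) (ℓ m : Fin n) : ℝ :=
  Matrix.det (Matrix.of fun ν μ : Fin κ =>
    a ν (if μ = r then ℓ else if μ = s then m else Fin.castLE h.le μ))

/-- The coefficients `μ_{i,j}` built from the constraint matrix `a` and a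
skew-symmetric matrix `A`. -/
noncomputable def muCoef {κ n : ℕ} (h : κ < n) (a : Matrix (Fin κ) (Fin n) ℝ)
    (A : Matrix (Fin n) (Fin n) ℝ) (i j : Fin (n - κ)) : ℝ :=
  (∑ r : Fin κ,
      (A (Fin.castLE h.le r) (shiftIdx h j) * detDr h a r (shiftIdx h i)
        - A (Fin.castLE h.le r) (shiftIdx h i) * detDr h a r (shiftIdx h j)))
    - A (shiftIdx h i) (shiftIdx h j) * detD h a
    - ∑ r : Fin κ, ∑ s : Fin κ,
        if r < s then
          A (Fin.castLE h.le r) (Fin.castLE h.le s)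
            * detDrs h a r s (shiftIdx h i) (shiftIdx h j)
        else 0

/-!
Multiplying by `φ`, it suffices to treat the rank-two skew matrix `A = p ⊗ a_ν - a_ν ⊗ p`.
Everything then reduces to Cramer's rule `∑_r a_{ν,r} D_r(ℓ) = a_{ν,ℓ} D`: since
`D_{s,r} = -D_{r,s}`, the sum over `r < s` symmetrises to
`∑_r p_r ∑_{s ≠ r} a_{ν,s} D_{r,s}`, and the inner sum is Cramer's rule for the matrix whose `r`-th column has already been
replaced. What remains cancels by Cramer's rule for `D` itself.
-/

open Finset

theorem Finset.sum_sum_ite_lt_add_swap {ι M : Type*} [Fintype ι] [LinearOrder ι]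
    [AddCommMonoid M] (g : ι → ι → M) :
    (∑ r, ∑ s, if r < s then g r s + g s r else 0) = ∑ r, ∑ s ∈ univ.erase r, g r s := by
  have hsplit : ∀ r s, (if r < s then g r s + g s r else 0) =
      (if r < s then g r s else 0) + if r < s then g s r else 0 := fun r s => by
    split_ifs <;> simp
  simp only [hsplit, sum_add_distrib]
  rw [sum_comm (f := fun r s => if r < s then g s r else 0), ← sum_add_distrib]
  refine sum_congr rfl fun r _ => ?_
  rw [← sum_add_distrib, ← filter_ne', sum_filter]
  refine sum_congr rfl fun s _ => ?_
  rcases lt_trichotomy r s with h | rfl | h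
  · simp [h, h.not_gt, h.ne']
  · simp
  · simp [h, h.not_gt, h.ne]

namespace Matrix

section DecidableEq

variable {R ι : Type*} [CommRing R] [Fintype ι] [DecidableEq ι]

theorem sum_mul_det_updateCol (M : Matrix ι ι R) (v : ι → R) (k : ι) :
    ∑ r, M k r * (M.updateCol r v).det = v k * M.det := by
  simpa [mulVec, dotProduct, cramer_apply, mul_comm] using congrFun (mulVec_cramer M v) k

theorem det_updateCol_updateCol_swap (M : Matrix ι ι R) {r s : ι} (hrs : r ≠ s)
    (v w : ι → R) :
    ((M.updateCol r w).updateCol s v).det = -((M.updateCol s w).updateCol r v).det := by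
  have hperm : (M.updateCol r w).updateCol s v =
      ((M.updateCol s w).updateCol r v).submatrix id (Equiv.swap r s) := by
    ext i μ
    rcases eq_or_ne μ r with rfl | hr
    · simp [updateCol_ne hrs, updateCol_ne hrs.symm]
    rcases eq_or_ne μ s with rfl | hs
    · simp
    · simp [Equiv.swap_apply_of_ne_of_ne hr hs, hr, hs]
  rw [hperm, det_permute', Equiv.Perm.sign_swap hrs]
  simp

theorem sum_erase_mul_det_updateCol_updateCol (M : Matrix ι ι R) (r : ι) (v w : ι → R)
    (k : ι) :
    ∑ s ∈ univ.erase r, M k s * ((M.updateCol s w).updateCol r v).det =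
      w k * (M.updateCol r v).det - v k * (M.updateCol r w).det := by
  have hcramer := sum_mul_det_updateCol (M.updateCol r v) w k
  rw [← add_sum_erase _ _ (mem_univ r), updateCol_idem, updateCol_self] at hcramer
  rw [← hcramer, add_sub_cancel_left]
  refine sum_congr rfl fun s hs => ?_
  rw [updateCol_ne (ne_of_mem_erase hs), updateCol_comm _ (ne_of_mem_erase hs)]

end DecidableEq

variable {R ι : Type*} [CommRing R] [Fintype ι] [LinearOrder ι]

theorem sum_lt_mul_det_updateCol_updateCol (M : Matrix ι ι R) (v w p : ι → R) (k : ι) :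
    (∑ r, ∑ s, if r < s then
        (p r * M k s - M k r * p s) * ((M.updateCol s w).updateCol r v).det else 0) =
      ∑ r, p r * (w k * (M.updateCol r v).det - v k * (M.updateCol r w).det) := by
  have hpair : ∀ r s, r < s →
      (p r * M k s - M k r * p s) * ((M.updateCol s w).updateCol r v).det =
        M k s * p r * ((M.updateCol s w).updateCol r v).det +
          M k r * p s * ((M.updateCol r w).updateCol s v).det := fun r s hrs => by
    rw [det_updateCol_updateCol_swap M hrs.ne]
    ring
  rw [sum_congr rfl fun r _ => sum_congr rfl fun s _ => ite_congr rfl (hpair r s) fun _ => rfl,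
    sum_sum_ite_lt_add_swap (fun r s => M k s * p r * ((M.updateCol s w).updateCol r v).det)]
  refine sum_congr rfl fun r _ => ?_
  rw [← sum_erase_mul_det_updateCol_updateCol, mul_sum]
  exact sum_congr rfl fun s _ => by ring

/-- The coefficient `μ_{i,j}` for `A = p ⊗ c - c ⊗ p`, where `c` is the `k`-th row of the
augmented matrix `[M | v | w]` and `p` is extended by `pv`, `pw` on the two extra columns. -/
theorem integrating_factor_identity (M : Matrix ι ι R) (v w p : ι → R) (k : ι) (pv pw : R) :
    ∑ r, ((p r * w k - M k r * pw) * (M.updateCol r v).det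
        - (p r * v k - M k r * pv) * (M.updateCol r w).det)
      - (pv * w k - v k * pw) * M.det
      - (∑ r, ∑ s, if r < s then
          (p r * M k s - M k r * p s) * ((M.updateCol s w).updateCol r v).det else 0) = 0 := by
  rw [sum_lt_mul_det_updateCol_updateCol, sub_right_comm, ← sum_sub_distrib]
  have hterm : ∀ r, (p r * w k - M k r * pw) * (M.updateCol r v).det
        - (p r * v k - M k r * pv) * (M.updateCol r w).det
        - p r * (w k * (M.updateCol r v).det - v k * (M.updateCol r w).det) =
      pv * (M k r * (M.updateCol r w).det) - pw * (M k r * (M.updateCol r v).det) :=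
    fun r => by ring
  simp only [hterm, sum_sub_distrib, ← mul_sum, sum_mul_det_updateCol]
  ring

end Matrix

section muCoef

variable {κ n : ℕ} (h : κ < n) (a : Matrix (Fin κ) (Fin n) ℝ)

theorem detD_eq_det : detD h a = (a.submatrix id (Fin.castLE h.le)).det := rfl

theorem detDr_eq_det_updateCol (r : Fin κ) (ℓ : Fin n) :
    detDr h a r ℓ = ((a.submatrix id (Fin.castLE h.le)).updateCol r (aᵀ ℓ)).det := by
  unfold detDr
  congr 1
  ext x μ
  simp [updateCol_apply, apply_ite (a x)]

theorem detDrs_eq_det_updateCol_updateCol (r s : Fin κ) (ℓ m : Fin n) :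
    detDrs h a r s ℓ m =
      (((a.submatrix id (Fin.castLE h.le)).updateCol s (aᵀ m)).updateCol r (aᵀ ℓ)).det := by
  unfold detDrs
  congr 1
  ext x μ
  simp [updateCol_apply, apply_ite (a x)]

theorem muCoef_smul (c : ℝ) (A : Matrix (Fin n) (Fin n) ℝ) (i j : Fin (n - κ)) :
    muCoef h a (c • A) i j = c * muCoef h a A i j := by
  simp only [muCoef, Matrix.smul_apply, smul_eq_mul, mul_sub, mul_sum, mul_ite, mul_zero, mul_assoc]

theorem muCoef_vecMulVec_sub_eq_zero (ν : Fin κ) (p : Fin n → ℝ) (i j : Fin (n - κ)) :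
    muCoef h a (vecMulVec p (a ν) - vecMulVec (a ν) p) i j = 0 := by
  simp only [muCoef, Matrix.sub_apply, vecMulVec_apply, detD_eq_det, detDr_eq_det_updateCol,
    detDrs_eq_det_updateCol_updateCol]
  exact integrating_factor_identity (a.submatrix id (Fin.castLE h.le)) (aᵀ (shiftIdx h i))
    (aᵀ (shiftIdx h j)) (p ∘ Fin.castLE h.le) ν (p (shiftIdx h i)) (p (shiftIdx h j))

end muCoef

theorem muCoef_vanishes_of_closure_general
    (κ n : ℕ) (h : κ < n)
    (a : Matrix (Fin κ) (Fin n) ℝ)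
    (A : Matrix (Fin n) (Fin n) ℝ)
    (ν : Fin κ)
    (φ : ℝ) (hφ : φ ≠ 0)
    (p : Fin n → ℝ)
    (hclos : ∀ i j : Fin n, φ * A i j = a ν j * p i - a ν i * p j) :
    ∀ i j : Fin (n - κ), muCoef h a A i j = 0 := by
  intro i j
  have hφA : φ • A = vecMulVec p (a ν) - vecMulVec (a ν) p := by
    ext x y
    rw [Matrix.smul_apply, smul_eq_mul, hclos, Matrix.sub_apply, vecMulVec_apply, vecMulVec_apply,
      mul_comm (p x), mul_comm (a ν x)]
  have hmu := muCoef_smul h a φ A i j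
  rw [hφA, muCoef_vecMulVec_sub_eq_zero] at hmu
  exact (mul_eq_zero.mp hmu.symm).resolve_left hφ

/-- If the pointwise closure conditions for a constraint admitting an integrating factor
hold, i.e. `φ·A_{i,j} = a_{ν,j}·p_i − a_{ν,i}·p_j` for some `φ ≠ 0` and some vector `p`,
then all coefficients `μ_{i,j}` vanish. -/
theorem muCoef_vanishes_of_closure
    (κ n : ℕ) (h : κ < n)
    (a : Matrix (Fin κ) (Fin n) ℝ)
    (A : Matrix (Fin n) (Fin n) ℝ)
    (hA : ∀ i j : Fin n, A j i = -A i j)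
    (ν : Fin κ)
    (φ : ℝ) (hφ : φ ≠ 0)
    (p : Fin n → ℝ)
    (hclos : ∀ i j : Fin n, φ * A i j = a ν j * p i - a ν i * p j) :
    ∀ i j : Fin (n - κ), muCoef h a A i j = 0 :=
  muCoef_vanishes_of_closure_general κ n h a A ν φ hφ p hclos
end
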